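/- arXiv:2405.03188 — 2 statements merged into one kernel-verified Lean document; each statement's English description precedes it below -/
import Mathlib

section
/- Let c > 0, σ > 0 and let d ≥ 1 be an integer. Then ∫₀^∞ exp(−r²/(2σ²))·(sinh(√c·r)/√c)^{d−1} dr = √(π/2)·σ·(2√c)^{−(d−1)} · ∑_{k=0}^{d−1} (−1)^k · binomial(d−1,k) · exp((d−1−2k)²·c·σ²/2) · (1 + (2/√π)·∫₀^{(d−1−2k)√c·σ/√2} exp(−t²) dt). -/
/-!
Expanding `sinh^(d-1)` binomially turns the integrand into a signed combination of the
functions `exp (-r²/(2σ²) + a r)` with `a = (d-1-2k)√c`. Completing the square,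
`-r²/(2σ²) + a r = a²σ²/2 - (r - aσ²)²/(2σ²)`, so each of them integrates over `(0, ∞)` to a
Gaussian integral over the half-line `(-aσ/√2, ∞)`, which is `√π/2 · (1 + erf (aσ/√2))`.
-/

open Real MeasureTheory intervalIntegral Finset

noncomputable def erf (x : ℝ) : ℝ := 2 / √π * ∫ t in (0 : ℝ)..x, exp (-t ^ 2)

theorem integral_Ioi_comp_sub_right {E : Type*} [NormedAddCommGroup E] [NormedSpace ℝ E]
    (f : ℝ → E) (a b : ℝ) :
    ∫ x in Set.Ioi a, f (x - b) = ∫ x in Set.Ioi (a - b), f x := by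
  have := (measurePreserving_sub_right volume b).setIntegral_preimage_emb
    (measurableEmbedding_subRight b) f (Set.Ioi (a - b))
  rwa [Set.preimage_sub_const_Ioi, sub_add_cancel] at this

theorem integrable_exp_neg_sq : Integrable fun t : ℝ ↦ exp (-t ^ 2) := by
  simpa using integrable_exp_neg_mul_sq one_pos

theorem integral_Ioi_neg_exp_neg_sq (b : ℝ) :
    ∫ t in Set.Ioi (-b), exp (-t ^ 2) = √π / 2 * (1 + erf b) := by
  have half : ∫ t in Set.Ioi (0 : ℝ), exp (-t ^ 2) = √π / 2 := by
    simpa using integral_gaussian_Ioi 1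
  have even : ∫ t in -b..0, exp (-t ^ 2) = ∫ t in (0 : ℝ)..b, exp (-t ^ 2) := by
    have := integral_comp_neg (a := 0) (b := b) fun t ↦ exp (-t ^ 2)
    simp only [neg_sq, neg_zero] at this
    exact this.symm
  rw [← integral_interval_add_Ioi integrable_exp_neg_sq.integrableOn
    integrable_exp_neg_sq.integrableOn, half, even, erf]
  field_simp [(sqrt_pos.2 pi_pos).ne']
  ring

theorem exp_neg_sq_div_add_mul (σ a r : ℝ) (hσ : σ ≠ 0) :
    exp (-r ^ 2 / (2 * σ ^ 2) + a * r)
      = exp (a ^ 2 * σ ^ 2 / 2) * exp (-((σ * √2)⁻¹ * (r - a * σ ^ 2)) ^ 2) := by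
  rw [← exp_add, mul_pow, inv_pow, mul_pow, sq_sqrt zero_le_two]
  congr 1
  field_simp
  ring

theorem integrable_exp_neg_sq_div_add_mul (σ a : ℝ) (hσ : 0 < σ) :
    Integrable fun r ↦ exp (-r ^ 2 / (2 * σ ^ 2) + a * r) := by
  simp_rw [exp_neg_sq_div_add_mul σ a _ hσ.ne']
  exact ((integrable_exp_neg_sq.comp_mul_left' (by positivity)).comp_sub_right _).const_mul _

theorem integral_Ioi_exp_neg_sq_div_add_mul (σ a : ℝ) (hσ : 0 < σ) :
    ∫ r in Set.Ioi (0 : ℝ), exp (-r ^ 2 / (2 * σ ^ 2) + a * r)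
      = √(π / 2) * σ * exp (a ^ 2 * σ ^ 2 / 2) * (1 + erf (a * σ / √2)) := by
  have hs : 0 < (σ * √2)⁻¹ := by positivity
  simp_rw [exp_neg_sq_div_add_mul σ a _ hσ.ne']
  rw [MeasureTheory.integral_const_mul,
    integral_Ioi_comp_sub_right (fun x ↦ exp (-((σ * √2)⁻¹ * x) ^ 2)),
    integral_comp_mul_left_Ioi (fun x ↦ exp (-x ^ 2)) _ hs,
    show (σ * √2)⁻¹ * (0 - a * σ ^ 2) = -(a * σ / √2) by field_simp; ring,
    integral_Ioi_neg_exp_neg_sq, smul_eq_mul, inv_inv, sqrt_div pi_pos.le]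
  field_simp
  rw [sq_sqrt zero_le_two]

theorem sinh_pow_eq_sum (x : ℝ) (n : ℕ) :
    sinh x ^ n = (2 ^ n)⁻¹ *
      ∑ k ∈ range (n + 1), (-1 : ℝ) ^ k * (n.choose k : ℝ) * exp (((n : ℝ) - 2 * k) * x) := by
  rw [sinh_eq, sub_eq_neg_add, div_pow, add_pow, div_eq_inv_mul, Finset.mul_sum,
    Finset.mul_sum]
  refine Finset.sum_congr rfl fun k hk ↦ ?_
  have hkn : k ≤ n := Nat.lt_succ_iff.mp (Finset.mem_range.mp hk)
  rw [neg_pow, ← exp_nat_mul, ← exp_nat_mul, Nat.cast_sub hkn,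
    show ((n : ℝ) - 2 * k) * x = k * -x + (n - k) * x by ring, exp_add]
  ring

theorem integral_Ioi_exp_neg_sq_div_mul_sinh_pow (σ a : ℝ) (hσ : 0 < σ) (n : ℕ) :
    ∫ r in Set.Ioi (0 : ℝ), exp (-r ^ 2 / (2 * σ ^ 2)) * sinh (a * r) ^ n
      = √(π / 2) * σ * (2 ^ n)⁻¹ * ∑ k ∈ range (n + 1), (-1 : ℝ) ^ k * (n.choose k : ℝ) *
          exp ((((n : ℝ) - 2 * k) * a) ^ 2 * σ ^ 2 / 2) *
            (1 + erf (((n : ℝ) - 2 * k) * a * σ / √2)) := by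
  have expand : ∀ r : ℝ, exp (-r ^ 2 / (2 * σ ^ 2)) * sinh (a * r) ^ n
      = ∑ k ∈ range (n + 1), (2 ^ n)⁻¹ * ((-1) ^ k * (n.choose k : ℝ)) *
          exp (-r ^ 2 / (2 * σ ^ 2) + (((n : ℝ) - 2 * k) * a) * r) := by
    intro r
    simp_rw [sinh_pow_eq_sum, Finset.mul_sum, exp_add]
    refine Finset.sum_congr rfl fun k _ ↦ ?_
    ring_nf
  simp_rw [expand]
  rw [integral_finsetSum _ fun k _ ↦
    ((integrable_exp_neg_sq_div_add_mul σ _ hσ).const_mul _).integrableOn, Finset.mul_sum]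
  simp_rw [MeasureTheory.integral_const_mul, integral_Ioi_exp_neg_sq_div_add_mul σ _ hσ]
  refine Finset.sum_congr rfl fun k _ ↦ ?_
  ring

/-- Radial normalizing integral of the isotropic wrapped normal distribution on the
`d`-dimensional Poincaré ball of curvature `c`:
`∫₀^∞ exp(−r²/(2σ²))·(sinh(√c·r)/√c)^(d−1) dr
 = √(π/2)·σ·(2√c)^{−(d−1)} ∑_{k=0}^{d−1} (−1)^k C(d−1,k) exp((d−1−2k)²cσ²/2)
     ·(1 + erf((d−1−2k)√c·σ/√2))`. -/
theorem stmt_9 (c σ : ℝ) (d : ℕ) (hc : 0 < c) (hσ : 0 < σ) (hd : 1 ≤ d) :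
    ∫ r in Set.Ioi (0 : ℝ),
        Real.exp (-r ^ 2 / (2 * σ ^ 2)) * (Real.sinh (Real.sqrt c * r) / Real.sqrt c) ^ (d - 1)
      = Real.sqrt (π / 2) * σ * (2 * Real.sqrt c) ^ (-((d : ℤ) - 1)) *
          ∑ k ∈ Finset.range d,
            (-1 : ℝ) ^ k * ((d - 1).choose k : ℝ) *
              Real.exp (((d : ℝ) - 1 - 2 * k) ^ 2 * c * σ ^ 2 / 2) *
              (1 + (2 / Real.sqrt π) *
                ∫ t in (0 : ℝ)..(((d : ℝ) - 1 - 2 * k) * Real.sqrt c * σ / Real.sqrt 2),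
                  Real.exp (-t ^ 2)) := by
  obtain ⟨n, rfl⟩ : ∃ n, d = n + 1 := ⟨d - 1, by omega⟩
  have integrand : ∀ r : ℝ, exp (-r ^ 2 / (2 * σ ^ 2)) * (sinh (√c * r) / √c) ^ n
      = (√c ^ n)⁻¹ * (exp (-r ^ 2 / (2 * σ ^ 2)) * sinh (√c * r) ^ n) := fun r ↦ by
    rw [div_pow]; ring
  have power : (2 * √c) ^ (-(((n + 1 : ℕ) : ℤ) - 1)) = (2 ^ n)⁻¹ * (√c ^ n)⁻¹ := by
    rw [show -(((n + 1 : ℕ) : ℤ) - 1) = -(n : ℤ) by push_cast; ring, zpow_neg, zpow_natCast,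
      mul_pow, mul_inv]
  simp_rw [Nat.add_sub_cancel, integrand, MeasureTheory.integral_const_mul,
    integral_Ioi_exp_neg_sq_div_mul_sinh_pow σ √c hσ n, power, mul_pow _ √c, sq_sqrt hc.le, erf,
    Nat.cast_add, Nat.cast_one, add_sub_cancel_right]
  ring
end

section
/- Let n ≥ 1 and let μ, ν : Fin (n+1) → ℝ satisfy ⟨μ,μ⟩_L = −1 and ⟨ν,ν⟩_L = −1, where ⟨x,y⟩_L := −(x 0)·(y 0) + ∑_{i=1}^{n} (x i)·(y i). Set α := −⟨ν,μ⟩_L and assume α + 1 ≠ 0. Let v : Fin (n+1) → ℝ satisfy ⟨v,ν⟩_L = 0, and define PT_{ν→μ}(v) := v + (⟨μ − α·ν, v⟩_L/(α + 1))·(ν + μ) and PT_{μ→ν}(u) := u + (⟨ν − α·μ, u⟩_L/(α + 1))·(μ + ν). Then PT_{μ→ν}(PT_{ν→μ}(v)) = v. -/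
open Real Finset

/-- The Lorentzian inner product on `ℝ^{n+1}`:
`⟨x,y⟩_L = −x₀·y₀ + ∑_{i=1}^{n} xᵢ·yᵢ`. -/
noncomputable def lorentzInner {n : ℕ} (x y : Fin (n + 1) → ℝ) : ℝ :=
  -(x 0 * y 0) + ∑ i : Fin n, x i.succ * y i.succ

lemma lorentzInner_symm {n : ℕ} (x y : Fin (n + 1) → ℝ) :
    lorentzInner x y = lorentzInner y x := by
  unfold lorentzInner
  simp [mul_comm]

lemma lorentzInner_sub_smul_left {n : ℕ} (x y z : Fin (n + 1) → ℝ) (c : ℝ) :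
    lorentzInner (fun j => x j - c * y j) z = lorentzInner x z - c * lorentzInner y z := by
  unfold lorentzInner
  have h : ∑ i : Fin n, (x i.succ - c * y i.succ) * z i.succ
      = ∑ i : Fin n, x i.succ * z i.succ - c * ∑ i : Fin n, y i.succ * z i.succ := by
    rw [Finset.mul_sum, ← Finset.sum_sub_distrib]
    exact Finset.sum_congr rfl fun i _ => by ring
  rw [h]; ring

lemma lorentzInner_add_smul_right {n : ℕ} (x y z w : Fin (n + 1) → ℝ) (t : ℝ) :
    lorentzInner x (fun k => y k + t * (z k + w k))
      = lorentzInner x y + t * (lorentzInner x z + lorentzInner x w) := by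
  unfold lorentzInner
  simp [mul_add, Finset.sum_add_distrib, Finset.mul_sum, mul_comm, mul_left_comm, mul_assoc]
  ring

/-- Parallel transport from `μ` to `ν` inverts parallel transport from `ν` to `μ`: with
`α = −⟨ν,μ⟩_L`, `PT_{ν→μ}(v) = v + (⟨μ − α·ν, v⟩_L/(α+1))·(ν + μ)` and
`PT_{μ→ν}(u) = u + (⟨ν − α·μ, u⟩_L/(α+1))·(μ + ν)`, one has
`PT_{μ→ν}(PT_{ν→μ}(v)) = v` for every tangent vector `v` at `ν`. -/
theorem stmt_18 (n : ℕ) (hn : 1 ≤ n) (μ ν v : Fin (n + 1) → ℝ)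
    (hμ : lorentzInner μ μ = -1) (hν : lorentzInner ν ν = -1)
    (hα : -lorentzInner ν μ + 1 ≠ 0) (hv : lorentzInner v ν = 0) :
    (fun i =>
        (fun k => v k +
          lorentzInner (fun j => μ j - (-lorentzInner ν μ) * ν j) v / (-lorentzInner ν μ + 1)
            * (ν k + μ k)) i +
        lorentzInner (fun j => ν j - (-lorentzInner ν μ) * μ j)
            (fun k => v k +
              lorentzInner (fun j => μ j - (-lorentzInner ν μ) * ν j) v
                / (-lorentzInner ν μ + 1) * (ν k + μ k))
          / (-lorentzInner ν μ + 1) * (μ i + ν i))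
      = v := by
  have hνv : lorentzInner ν v = 0 := by rw [lorentzInner_symm]; exact hv
  have hμν : lorentzInner μ ν = lorentzInner ν μ := lorentzInner_symm μ ν
  funext i
  simp only [lorentzInner_sub_smul_left, lorentzInner_add_smul_right]
  rw [hμν, hν, hμ, hνv]
  field_simp
  ring
end
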